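/- For every sequent Γ▷Δ there is a finite set A of atomic sequents equivalent to Γ▷Δ in ⊢_GB, i.e. {Γ▷Δ} ⊢_GB s for every s ∈ A and A ⊢_GB Γ▷Δ. Moreover, for every finite set T of sequents there is a formula φ such that T and the single sequent ∅▷φ are equivalent in ⊢_GB, i.e. T ⊢_GB ∅▷φ and {∅▷φ} ⊢_GB s for every s ∈ T. -/

import Mathlib

/-- Propositional formulas: atoms, conjunction, disjunction, De Morgan negation, ⊤, ⊥. -/
inductive Fm : Type where
  | atom : ℕ → Fm
  | conj : Fm → Fm → Fm
  | disj : Fm → Fm → Fm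
  | neg  : Fm → Fm
  | top  : Fm
  | bot  : Fm
deriving DecidableEq

/-- A sequent is a pair of finite multisets of formulas. -/
abbrev Sqnt : Type := Multiset Fm × Multiset Fm

/-- A formula is an atom. -/
def isAtom (φ : Fm) : Prop := ∃ i, φ = Fm.atom i

/-- A sequent is atomic if every formula in it is an atom. -/
def AtomicSeq (s : Sqnt) : Prop := (∀ φ ∈ s.1, isAtom φ) ∧ (∀ φ ∈ s.2, isAtom φ)

/-- Derivability of a sequent from a set `S` of sequents in a super-Belnap calculus.
The calculus always contains the common structural rules of Weakening and Contraction.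
The `Prop` flags switch further rules on and off:
`i` = the introduction rules (incl. the axioms `∅▷⊤` and `⊥▷∅`),
`e` = the elimination rules, `d` = Identity, `c` = Cut, `l` = Limited Cut. -/
inductive Drv (i e d c l : Prop) (S : Set Sqnt) : Sqnt → Prop where
  | prem {s} : s ∈ S → Drv i e d c l S s
  -- common structural rules: Weakening and Contraction
  | wkL (φ : Fm) {Γ Δ} : Drv i e d c l S (Γ, Δ) → Drv i e d c l S (φ ::ₘ Γ, Δ)
  | wkR (φ : Fm) {Γ Δ} : Drv i e d c l S (Γ, Δ) → Drv i e d c l S (Γ, φ ::ₘ Δ)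
  | ctrL {φ Γ Δ} : Drv i e d c l S (φ ::ₘ φ ::ₘ Γ, Δ) → Drv i e d c l S (φ ::ₘ Γ, Δ)
  | ctrR {φ Γ Δ} : Drv i e d c l S (Γ, φ ::ₘ φ ::ₘ Δ) → Drv i e d c l S (Γ, φ ::ₘ Δ)
  -- introduction rules
  | andR {φ ψ Γ Δ} : i → Drv i e d c l S (Γ, φ ::ₘ Δ) → Drv i e d c l S (Γ, ψ ::ₘ Δ) →
      Drv i e d c l S (Γ, Fm.conj φ ψ ::ₘ Δ)
  | andL {φ ψ Γ Δ} : i → Drv i e d c l S (φ ::ₘ ψ ::ₘ Γ, Δ) →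
      Drv i e d c l S (Fm.conj φ ψ ::ₘ Γ, Δ)
  | orL {φ ψ Γ Δ} : i → Drv i e d c l S (φ ::ₘ Γ, Δ) → Drv i e d c l S (ψ ::ₘ Γ, Δ) →
      Drv i e d c l S (Fm.disj φ ψ ::ₘ Γ, Δ)
  | orR {φ ψ Γ Δ} : i → Drv i e d c l S (Γ, φ ::ₘ ψ ::ₘ Δ) →
      Drv i e d c l S (Γ, Fm.disj φ ψ ::ₘ Δ)
  | negR {φ Γ Δ} : i → Drv i e d c l S (φ ::ₘ Γ, Δ) → Drv i e d c l S (Γ, Fm.neg φ ::ₘ Δ)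
  | negL {φ Γ Δ} : i → Drv i e d c l S (Γ, φ ::ₘ Δ) → Drv i e d c l S (Fm.neg φ ::ₘ Γ, Δ)
  | topR : i → Drv i e d c l S (0, {Fm.top})
  | botL : i → Drv i e d c l S ({Fm.bot}, 0)
  -- elimination rules
  | andRE1 {φ ψ Γ Δ} : e → Drv i e d c l S (Γ, Fm.conj φ ψ ::ₘ Δ) → Drv i e d c l S (Γ, φ ::ₘ Δ)
  | andRE2 {φ ψ Γ Δ} : e → Drv i e d c l S (Γ, Fm.conj φ ψ ::ₘ Δ) → Drv i e d c l S (Γ, ψ ::ₘ Δ)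
  | andLE {φ ψ Γ Δ} : e → Drv i e d c l S (Fm.conj φ ψ ::ₘ Γ, Δ) →
      Drv i e d c l S (φ ::ₘ ψ ::ₘ Γ, Δ)
  | orLE1 {φ ψ Γ Δ} : e → Drv i e d c l S (Fm.disj φ ψ ::ₘ Γ, Δ) → Drv i e d c l S (φ ::ₘ Γ, Δ)
  | orLE2 {φ ψ Γ Δ} : e → Drv i e d c l S (Fm.disj φ ψ ::ₘ Γ, Δ) → Drv i e d c l S (ψ ::ₘ Γ, Δ)
  | orRE {φ ψ Γ Δ} : e → Drv i e d c l S (Γ, Fm.disj φ ψ ::ₘ Δ) →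
      Drv i e d c l S (Γ, φ ::ₘ ψ ::ₘ Δ)
  | negRE {φ Γ Δ} : e → Drv i e d c l S (Γ, Fm.neg φ ::ₘ Δ) → Drv i e d c l S (φ ::ₘ Γ, Δ)
  | negLE {φ Γ Δ} : e → Drv i e d c l S (Fm.neg φ ::ₘ Γ, Δ) → Drv i e d c l S (Γ, φ ::ₘ Δ)
  | topLE {Γ Δ} : e → Drv i e d c l S (Fm.top ::ₘ Γ, Δ) → Drv i e d c l S (Γ, Δ)
  | botRE {Γ Δ} : e → Drv i e d c l S (Γ, Fm.bot ::ₘ Δ) → Drv i e d c l S (Γ, Δ)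
  -- Identity
  | ident (φ : Fm) : d → Drv i e d c l S ({φ}, {φ})
  -- Cut
  | cut {φ Γ Γ' Δ Δ'} : c → Drv i e d c l S (Γ, φ ::ₘ Δ) → Drv i e d c l S (φ ::ₘ Γ', Δ') →
      Drv i e d c l S (Γ + Γ', Δ + Δ')
  -- Limited Cut
  | lcut1 {φ Γ Δ} : l → Drv i e d c l S (0, {φ}) → Drv i e d c l S (φ ::ₘ Γ, Δ) →
      Drv i e d c l S (Γ, Δ)
  | lcut2 {φ Γ Δ} : l → Drv i e d c l S (Γ, φ ::ₘ Δ) → Drv i e d c l S ({φ}, 0) →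
      Drv i e d c l S (Γ, Δ)

/-- Derivability in the calculus GB: introduction rules, elimination rules and the
common structural rules (no Identity, no Cut). -/
abbrev GB : Set Sqnt → Sqnt → Prop := Drv True True False False False

/-!
Each introduction rule of GB is inverted by the matching elimination rules, so over any set
of premises a sequent containing a compound formula is interderivable with the premises of
the rule that introduces it (with ⊤ on the right or ⊥ on the left it is derivable outright).
Decomposing connectives until only atoms remain, by induction on the number of connectives,
gives the finite atomic set. Conversely, `Γ ▷ Δ` is interderivable with `∅ ▷ ⋁(−Γ) ∨ ⋁Δ`,
and finitely many sequents `∅ ▷ φₖ` with the single sequent `∅ ▷ ⋀ φₖ`.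
-/

namespace Fm

def degree : Fm → ℕ
  | atom _ => 0
  | conj φ ψ => φ.degree + ψ.degree + 1
  | disj φ ψ => φ.degree + ψ.degree + 1
  | neg φ => φ.degree + 1
  | top => 1
  | bot => 1

def bigDisj (L : List Fm) : Fm := L.foldr disj bot

def bigConj (L : List Fm) : Fm := L.foldr conj top

end Fm

namespace Sqnt

def degree (s : Sqnt) : ℕ := (s.1.map Fm.degree).sum + (s.2.map Fm.degree).sum

noncomputable def formula (s : Sqnt) : Fm := Fm.bigDisj (s.1.toList.map Fm.neg ++ s.2.toList)

noncomputable def setFormula (T : Finset Sqnt) : Fm := Fm.bigConj (T.toList.map formula)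

end Sqnt

namespace Drv

open Fm

variable {i e d c l : Prop} {S : Set Sqnt} {Γ Δ : Multiset Fm}

theorem weaken_left (Γ₀ : Multiset Fm) (h : Drv i e d c l S (Γ, Δ)) :
    Drv i e d c l S (Γ₀ + Γ, Δ) := by
  induction Γ₀ using Multiset.induction_on with
  | empty => simpa using h
  | cons φ Γ₀ ih => simpa using ih.wkL φ

theorem weaken_right (Δ₀ : Multiset Fm) (h : Drv i e d c l S (Γ, Δ)) :
    Drv i e d c l S (Γ, Δ₀ + Δ) := by
  induction Δ₀ using Multiset.induction_on with
  | empty => simpa using h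
  | cons φ Δ₀ ih => simpa using ih.wkR φ

theorem weaken_of_le {Γ' Δ' : Multiset Fm} (h : Drv i e d c l S (Γ, Δ)) (hΓ : Γ ≤ Γ')
    (hΔ : Δ ≤ Δ') : Drv i e d c l S (Γ', Δ') := by
  have h' := (h.weaken_left (Γ' - Γ)).weaken_right (Δ' - Δ)
  rwa [tsub_add_cancel_of_le hΓ, tsub_add_cancel_of_le hΔ] at h'

theorem conj_left_iff (hi : i) (he : e) {φ ψ : Fm} :
    Drv i e d c l S (conj φ ψ ::ₘ Γ, Δ) ↔ Drv i e d c l S (φ ::ₘ ψ ::ₘ Γ, Δ) :=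
  ⟨andLE he, andL hi⟩

theorem conj_right_iff (hi : i) (he : e) {φ ψ : Fm} :
    Drv i e d c l S (Γ, conj φ ψ ::ₘ Δ) ↔
      Drv i e d c l S (Γ, φ ::ₘ Δ) ∧ Drv i e d c l S (Γ, ψ ::ₘ Δ) :=
  ⟨fun h => ⟨andRE1 he h, andRE2 he h⟩, fun h => andR hi h.1 h.2⟩

theorem disj_left_iff (hi : i) (he : e) {φ ψ : Fm} :
    Drv i e d c l S (disj φ ψ ::ₘ Γ, Δ) ↔
      Drv i e d c l S (φ ::ₘ Γ, Δ) ∧ Drv i e d c l S (ψ ::ₘ Γ, Δ) :=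
  ⟨fun h => ⟨orLE1 he h, orLE2 he h⟩, fun h => orL hi h.1 h.2⟩

theorem disj_right_iff (hi : i) (he : e) {φ ψ : Fm} :
    Drv i e d c l S (Γ, disj φ ψ ::ₘ Δ) ↔ Drv i e d c l S (Γ, φ ::ₘ ψ ::ₘ Δ) :=
  ⟨orRE he, orR hi⟩

theorem neg_left_iff (hi : i) (he : e) {φ : Fm} :
    Drv i e d c l S (neg φ ::ₘ Γ, Δ) ↔ Drv i e d c l S (Γ, φ ::ₘ Δ) :=
  ⟨negLE he, negL hi⟩

theorem neg_right_iff (hi : i) (he : e) {φ : Fm} :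
    Drv i e d c l S (Γ, neg φ ::ₘ Δ) ↔ Drv i e d c l S (φ ::ₘ Γ, Δ) :=
  ⟨negRE he, negR hi⟩

theorem top_left_iff (he : e) : Drv i e d c l S (top ::ₘ Γ, Δ) ↔ Drv i e d c l S (Γ, Δ) :=
  ⟨topLE he, wkL top⟩

theorem bot_right_iff (he : e) : Drv i e d c l S (Γ, bot ::ₘ Δ) ↔ Drv i e d c l S (Γ, Δ) :=
  ⟨botRE he, wkR bot⟩

theorem top_right (hi : i) : Drv i e d c l S (Γ, top ::ₘ Δ) :=
  (topR hi).weaken_of_le zero_le (by simp)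

theorem bot_left (hi : i) : Drv i e d c l S (bot ::ₘ Γ, Δ) :=
  (botL hi).weaken_of_le (by simp) zero_le

theorem bigDisj_right_iff (hi : i) (he : e) (K : List Fm) :
    Drv i e d c l S (Γ, bigDisj K ::ₘ Δ) ↔ Drv i e d c l S (Γ, ↑K + Δ) := by
  induction K generalizing Δ with
  | nil => simpa [bigDisj] using bot_right_iff he
  | cons φ K ih =>
    rw [bigDisj, List.foldr_cons, disj_right_iff hi he, Multiset.cons_swap, ← bigDisj, ih,
      Multiset.add_cons, ← Multiset.cons_coe, Multiset.cons_add]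

theorem bigConj_right_iff (hi : i) (he : e) (K : List Fm) :
    Drv i e d c l S (Γ, bigConj K ::ₘ Δ) ↔ ∀ φ ∈ K, Drv i e d c l S (Γ, φ ::ₘ Δ) := by
  induction K with
  | nil => simpa [bigConj] using top_right hi
  | cons φ K ih => rw [bigConj, List.foldr_cons, conj_right_iff hi he, ← bigConj, ih]; simp

theorem negs_right_iff (hi : i) (he : e) (Γ₀ : Multiset Fm) :
    Drv i e d c l S (Γ, Γ₀.map neg + Δ) ↔ Drv i e d c l S (Γ₀ + Γ, Δ) := by
  induction Γ₀ using Multiset.induction_on generalizing Γ Δ with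
  | empty => simp
  | cons φ Γ₀ ih =>
    rw [Multiset.map_cons, Multiset.cons_add, ← Multiset.add_cons, ih, neg_right_iff hi he,
      Multiset.cons_add]

theorem formula_iff (hi : i) (he : e) (s : Sqnt) :
    Drv i e d c l S (0, {s.formula}) ↔ Drv i e d c l S s := by
  rw [← Multiset.cons_zero, Sqnt.formula, bigDisj_right_iff hi he, ← Multiset.coe_add,
    ← Multiset.map_coe, Multiset.coe_toList, Multiset.coe_toList, add_zero,
    negs_right_iff hi he, add_zero]

theorem setFormula_iff (hi : i) (he : e) (T : Finset Sqnt) :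
    Drv i e d c l S (0, {Sqnt.setFormula T}) ↔ ∀ s ∈ T, Drv i e d c l S s := by
  rw [Sqnt.setFormula, ← Multiset.cons_zero, bigConj_right_iff hi he]
  simp only [List.forall_mem_map, Finset.mem_toList, Multiset.cons_zero, formula_iff hi he]

variable (i e d c l) in
def Interderivable (A B : Set Sqnt) : Prop :=
  ∀ S, (∀ a ∈ A, Drv i e d c l S a) ↔ ∀ b ∈ B, Drv i e d c l S b

namespace Interderivable

variable {A B C A' B' : Set Sqnt}

theorem symm (h : Interderivable i e d c l A B) : Interderivable i e d c l B A :=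
  fun S => (h S).symm

theorem trans (h : Interderivable i e d c l A B) (h' : Interderivable i e d c l B C) :
    Interderivable i e d c l A C :=
  fun S => (h S).trans (h' S)

theorem union (h : Interderivable i e d c l A B) (h' : Interderivable i e d c l A' B') :
    Interderivable i e d c l (A ∪ A') (B ∪ B') :=
  fun S => by simp only [Set.mem_union, or_imp, forall_and, h S, h' S]

theorem derives (h : Interderivable i e d c l A B) : ∀ b ∈ B, Drv i e d c l A b :=
  (h A).1 fun _ => prem

end Interderivable

theorem exists_reduction_left (hi : i) (he : e) {φ : Fm} (hφ : ¬isAtom φ) (Γ Δ : Multiset Fm) :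
    ∃ T : Finset Sqnt, (∀ t ∈ T, t.degree < Sqnt.degree (φ ::ₘ Γ, Δ)) ∧
      Interderivable i e d c l {(φ ::ₘ Γ, Δ)} T := by
  cases φ with
  | atom n => exact absurd ⟨n, rfl⟩ hφ
  | conj φ ψ =>
    refine ⟨{(φ ::ₘ ψ ::ₘ Γ, Δ)}, ?_, fun S => by simp [conj_left_iff hi he]⟩
    simp [Sqnt.degree, Fm.degree]
    omega
  | disj φ ψ =>
    refine ⟨{(φ ::ₘ Γ, Δ), (ψ ::ₘ Γ, Δ)}, ?_, fun S => by simp [disj_left_iff hi he]⟩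
    simp [Sqnt.degree, Fm.degree]
  | neg φ =>
    refine ⟨{(Γ, φ ::ₘ Δ)}, ?_, fun S => by simp [neg_left_iff hi he]⟩
    simp [Sqnt.degree, Fm.degree]
    omega
  | top =>
    refine ⟨{(Γ, Δ)}, ?_, fun S => by simp [top_left_iff he]⟩
    simp [Sqnt.degree, Fm.degree]
  | bot => exact ⟨∅, by simp, fun S => by simp [bot_left hi]⟩

theorem exists_reduction_right (hi : i) (he : e) {φ : Fm} (hφ : ¬isAtom φ) (Γ Δ : Multiset Fm) :
    ∃ T : Finset Sqnt, (∀ t ∈ T, t.degree < Sqnt.degree (Γ, φ ::ₘ Δ)) ∧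
      Interderivable i e d c l {(Γ, φ ::ₘ Δ)} T := by
  cases φ with
  | atom n => exact absurd ⟨n, rfl⟩ hφ
  | conj φ ψ =>
    refine ⟨{(Γ, φ ::ₘ Δ), (Γ, ψ ::ₘ Δ)}, ?_, fun S => by simp [conj_right_iff hi he]⟩
    simp [Sqnt.degree, Fm.degree]
  | disj φ ψ =>
    refine ⟨{(Γ, φ ::ₘ ψ ::ₘ Δ)}, ?_, fun S => by simp [disj_right_iff hi he]⟩
    simp [Sqnt.degree, Fm.degree]
    omega
  | neg φ =>
    refine ⟨{(φ ::ₘ Γ, Δ)}, ?_, fun S => by simp [neg_right_iff hi he]⟩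
    simp [Sqnt.degree, Fm.degree]
    omega
  | top => exact ⟨∅, by simp, fun S => by simp [top_right hi]⟩
  | bot =>
    refine ⟨{(Γ, Δ)}, ?_, fun S => by simp [bot_right_iff he]⟩
    simp [Sqnt.degree, Fm.degree]

theorem exists_reduction (hi : i) (he : e) {s : Sqnt} (hs : ¬AtomicSeq s) :
    ∃ T : Finset Sqnt, (∀ t ∈ T, t.degree < s.degree) ∧ Interderivable i e d c l {s} T := by
  obtain ⟨Γ, Δ⟩ := s
  simp only [AtomicSeq, not_and_or, not_forall, exists_prop] at hs
  rcases hs with ⟨φ, hφΓ, hφ⟩ | ⟨φ, hφΔ, hφ⟩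
  · rw [← Multiset.cons_erase hφΓ]
    exact exists_reduction_left hi he hφ _ _
  · rw [← Multiset.cons_erase hφΔ]
    exact exists_reduction_right hi he hφ _ _

theorem exists_atomic_interderivable_of_forall (T : Finset Sqnt)
    (h : ∀ t ∈ T, ∃ A : Finset Sqnt, (∀ a ∈ A, AtomicSeq a) ∧ Interderivable i e d c l {t} A) :
    ∃ A : Finset Sqnt, (∀ a ∈ A, AtomicSeq a) ∧ Interderivable i e d c l T A := by
  classical
  induction T using Finset.induction_on with
  | empty => exact ⟨∅, by simp, fun S => Iff.rfl⟩
  | insert t T _ ih =>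
    obtain ⟨A, hA, htA⟩ := h t (Finset.mem_insert_self t T)
    obtain ⟨B, hB, hTB⟩ := ih fun u hu => h u (Finset.mem_insert_of_mem hu)
    refine ⟨A ∪ B, ?_, ?_⟩
    · exact fun a ha => (Finset.mem_union.1 ha).elim (hA a) (hB a)
    · rw [Finset.coe_insert, Set.insert_eq, Finset.coe_union]
      exact htA.union hTB

theorem exists_atomic_interderivable (hi : i) (he : e) (s : Sqnt) :
    ∃ A : Finset Sqnt, (∀ a ∈ A, AtomicSeq a) ∧ Interderivable i e d c l {s} A := by
  induction hn : s.degree using Nat.strong_induction_on generalizing s with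
  | _ n ih =>
  by_cases hs : AtomicSeq s
  · exact ⟨{s}, by simpa using hs, fun S => by simp⟩
  obtain ⟨T, hT, hsT⟩ := exists_reduction hi he hs
  obtain ⟨A, hA, hTA⟩ :=
    exists_atomic_interderivable_of_forall T fun t ht => ih _ (hn ▸ hT t ht) t rfl
  exact ⟨A, hA, hsT.trans hTA⟩

theorem interderivable_setFormula (hi : i) (he : e) (T : Finset Sqnt) :
    Interderivable i e d c l {(0, {Sqnt.setFormula T})} T :=
  fun S => by simpa using setFormula_iff hi he T

end Drv

/-- Every sequent is equivalent in ⊢_GB to a finite set of atomic sequents, and every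
finite set of sequents is equivalent in ⊢_GB to a single sequent of the form ∅▷φ. -/
theorem stmt2 :
    (∀ Γ Δ : Multiset Fm, ∃ A : Finset Sqnt,
      (∀ s ∈ A, AtomicSeq s) ∧
      (∀ s ∈ A, GB {(Γ, Δ)} s) ∧
      GB (↑A) (Γ, Δ)) ∧
    (∀ T : Finset Sqnt, ∃ φ : Fm,
      GB (↑T) ((0 : Multiset Fm), ({φ} : Multiset Fm)) ∧
      (∀ s ∈ T, GB ({((0 : Multiset Fm), ({φ} : Multiset Fm))} : Set Sqnt) s)) := by
  refine ⟨fun Γ Δ => ?_, fun T => ?_⟩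
  · obtain ⟨A, hA, h⟩ := Drv.exists_atomic_interderivable trivial trivial (Γ, Δ)
    exact ⟨A, hA, h.derives, h.symm.derives _ rfl⟩
  · have h : Drv.Interderivable True True False False False _ _ :=
      Drv.interderivable_setFormula trivial trivial T
    exact ⟨_, h.symm.derives _ rfl, h.derives⟩
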